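/- arXiv:0709.0258 — 4 statements merged into one kernel-verified Lean document; each statement's English description precedes it below -/
import Mathlib

section
/- Fix α ∈ (1,2], β > 0, Δ ∈ (0,1), δ > 0 and set δ₁ = δ/Δ. Let f : [0,1] → [0,1] be differentiable with |f(x)| ≤ β, |f'(x)| ≤ β and |f'(y) − f'(x)| ≤ β|y−x|^{α−1} for all x,y ∈ [0,1]. Let I_m = [(m−1)Δ, mΔ] with center x_m = (m−1/2)Δ for an integer m with 1 ≤ m ≤ 1/Δ. Let h⁽⁰⁾ be an integer closest to f(x_m)/δ and h⁽¹⁾ an integer closest to f'(x_m)/δ₁, and define p(x) = h⁽⁰⁾δ + h⁽¹⁾δ₁(x − x_m). Then for all x ∈ I_m, |f(x) − p(x)| ≤ (1/2^α)βΔ^α + (3/4)δ. -/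
/-!
Split the error at the centre `xₘ` of the cell as
`(f x - f xₘ - f' xₘ (x - xₘ)) + (f xₘ - h⁽⁰⁾δ) + (f' xₘ - h⁽¹⁾δ₁)(x - xₘ)`.
Since `f'` is `(α - 1)`-Hölder, the mean value inequality applied to `t ↦ f t - f' xₘ t` bounds the
Taylor remainder by `β |x - xₘ|^α ≤ β (Δ/2)^α`. Rounding to the nearest grid point costs at most
`δ/2` in the value and `δ₁/2` in the slope, and the latter is multiplied by `|x - xₘ| ≤ Δ/2`,
giving `δ/4` because `δ₁ = δ/Δ`.
-/

open Set

theorem Icc_cell_subset_Icc_zero_one {Δ m : ℝ} (hΔ : 0 < Δ) (hm : 1 ≤ m) (hmΔ : m * Δ ≤ 1) :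
    Icc ((m - 1) * Δ) (m * Δ) ⊆ Icc 0 1 :=
  Icc_subset_Icc (by nlinarith) hmΔ

theorem abs_sub_mul_le_of_abs_sub_div_le {a h q ε : ℝ} (hq : 0 < q) (hh : |h - a / q| ≤ ε) :
    |a - h * q| ≤ q * ε := by
  have hsplit : a - h * q = -(q * (h - a / q)) := by field_simp; ring
  rw [hsplit, abs_neg, abs_mul, abs_of_pos hq]
  exact mul_le_mul_of_nonneg_left hh hq.le

theorem abs_taylor_remainder_le_of_holder_deriv {f f' : ℝ → ℝ} {s : Set ℝ} (hs : Convex ℝ s)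
    {β γ : ℝ} (hβ : 0 ≤ β) (hγ : 0 ≤ γ) (hf : ∀ t ∈ s, HasDerivWithinAt f (f' t) s t)
    {x y : ℝ} (hx : x ∈ s) (hy : y ∈ s) (hhold : ∀ t ∈ s, |f' t - f' x| ≤ β * |t - x| ^ γ) :
    |f y - f x - f' x * (y - x)| ≤ β * |y - x| ^ (γ + 1) := by
  have hseg : uIcc x y ⊆ s := hs.ordConnected.uIcc_subset hx hy
  have hderiv : ∀ t ∈ uIcc x y,
      HasDerivWithinAt (fun u => f u - f' x * u) (f' t - f' x) (uIcc x y) t := fun t ht => by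
    simpa using ((hf t (hseg ht)).fun_sub ((hasDerivWithinAt_id t s).const_mul (f' x))).mono hseg
  have hbound : ∀ t ∈ uIcc x y, ‖f' t - f' x‖ ≤ β * |y - x| ^ γ := fun t ht => by
    have hdist : |t - x| ≤ |y - x| :=
      abs_sub_le_of_uIcc_subset_uIcc (uIcc_subset_uIcc_left ht)
    calc ‖f' t - f' x‖ ≤ β * |t - x| ^ γ := hhold t (hseg ht)
      _ ≤ β * |y - x| ^ γ := by gcongr
  have hmvt := convex_uIcc x y |>.norm_image_sub_le_of_norm_hasDerivWithin_le hderiv hbound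
    left_mem_uIcc right_mem_uIcc
  rw [Real.rpow_add_one' (abs_nonneg _) (by linarith), ← mul_assoc]
  calc |f y - f x - f' x * (y - x)| = ‖(f y - f' x * y) - (f x - f' x * x)‖ := by
        rw [Real.norm_eq_abs]; ring_nf
    _ ≤ β * |y - x| ^ γ * |y - x| := hmvt

theorem local_quantized_approx_general (α β Δ δ : ℝ) (hα₁ : 1 < α) (hβ : 0 < β)
    (hΔ : Δ ∈ Set.Ioo (0:ℝ) 1) (hδ : 0 < δ)
    (f f' : ℝ → ℝ)
    (hdiff : ∀ x ∈ Set.Icc (0:ℝ) 1, HasDerivWithinAt f (f' x) (Set.Icc (0:ℝ) 1) x)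
    (hhold : ∀ x ∈ Set.Icc (0:ℝ) 1, ∀ y ∈ Set.Icc (0:ℝ) 1,
      |f' y - f' x| ≤ β * |y - x| ^ (α - 1))
    (m : ℕ) (hm₁ : 1 ≤ m) (hm₂ : (m : ℝ) ≤ 1 / Δ)
    (h0 h1 : ℤ)
    (hh0 : |(h0 : ℝ) - f ((m - 1/2) * Δ) / δ| ≤ 1/2)
    (hh1 : |(h1 : ℝ) - f' ((m - 1/2) * Δ) / (δ / Δ)| ≤ 1/2) :
    ∀ x ∈ Set.Icc (((m : ℝ) - 1) * Δ) ((m : ℝ) * Δ),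
      |f x - ((h0 : ℝ) * δ + (h1 : ℝ) * (δ / Δ) * (x - ((m : ℝ) - 1/2) * Δ))|
        ≤ (1 / 2 ^ α) * β * Δ ^ α + (3/4) * δ := by
  intro x hxcell
  obtain ⟨hΔ0, -⟩ := hΔ
  set xm : ℝ := ((m : ℝ) - 1/2) * Δ
  have hm : (1 : ℝ) ≤ m := by exact_mod_cast hm₁
  have hmΔ : (m : ℝ) * Δ ≤ 1 := by rwa [le_div_iff₀ hΔ0] at hm₂
  have hcell := Icc_cell_subset_Icc_zero_one hΔ0 hm hmΔ
  have hx : x ∈ Icc (0:ℝ) 1 := hcell hxcell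
  have hxm_eq : xm = ((m : ℝ) - 1/2) * Δ := rfl
  have hxm : xm ∈ Icc (0:ℝ) 1 := hcell ⟨by linarith, by linarith⟩
  have hdist : |x - xm| ≤ Δ / 2 := abs_le.2 ⟨by linarith [hxcell.1], by linarith [hxcell.2]⟩
  have htaylor : |f x - f xm - f' xm * (x - xm)| ≤ 1 / 2 ^ α * β * Δ ^ α := by
    have h := abs_taylor_remainder_le_of_holder_deriv (convex_Icc 0 1) hβ.le (by linarith) hdiff
      hxm hx (fun t ht => hhold xm hxm t ht)
    rw [sub_add_cancel] at h
    calc _ ≤ β * |x - xm| ^ α := h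
      _ ≤ β * (Δ / 2) ^ α := by gcongr
      _ = 1 / 2 ^ α * β * Δ ^ α := by rw [Real.div_rpow hΔ0.le zero_le_two]; ring
  have hq0 : |f xm - h0 * δ| ≤ δ * (1/2) := abs_sub_mul_le_of_abs_sub_div_le hδ hh0
  have hq1 : |f' xm - h1 * (δ / Δ)| ≤ δ / Δ * (1/2) :=
    abs_sub_mul_le_of_abs_sub_div_le (div_pos hδ hΔ0) hh1
  have hslope : |(f' xm - h1 * (δ / Δ)) * (x - xm)| ≤ δ / 4 := by
    rw [abs_mul]
    calc _ ≤ δ / Δ * (1/2) * (Δ / 2) := by gcongr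
      _ = δ / 4 := by field_simp; ring
  calc _ = |(f x - f xm - f' xm * (x - xm)) + (f xm - h0 * δ)
          + (f' xm - h1 * (δ / Δ)) * (x - xm)| := by congr 1; ring
    _ ≤ |f x - f xm - f' xm * (x - xm)| + |f xm - h0 * δ|
          + |(f' xm - h1 * (δ / Δ)) * (x - xm)| := abs_add_three _ _ _
    _ ≤ 1 / 2 ^ α * β * Δ ^ α + (3/4) * δ := by linarith

/-- local quantized-polynomial approximation, k = 1, α ∈ (1,2]. -/
theorem local_quantized_approx (α β Δ δ : ℝ) (hα₁ : 1 < α) (hα₂ : α ≤ 2) (hβ : 0 < β)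
    (hΔ : Δ ∈ Set.Ioo (0:ℝ) 1) (hδ : 0 < δ)
    (f f' : ℝ → ℝ)
    (hrange : ∀ x ∈ Set.Icc (0:ℝ) 1, f x ∈ Set.Icc (0:ℝ) 1)
    (hdiff : ∀ x ∈ Set.Icc (0:ℝ) 1, HasDerivWithinAt f (f' x) (Set.Icc (0:ℝ) 1) x)
    (hf : ∀ x ∈ Set.Icc (0:ℝ) 1, |f x| ≤ β)
    (hf' : ∀ x ∈ Set.Icc (0:ℝ) 1, |f' x| ≤ β)
    (hhold : ∀ x ∈ Set.Icc (0:ℝ) 1, ∀ y ∈ Set.Icc (0:ℝ) 1,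
      |f' y - f' x| ≤ β * |y - x| ^ (α - 1))
    (m : ℕ) (hm₁ : 1 ≤ m) (hm₂ : (m : ℝ) ≤ 1 / Δ)
    (h0 h1 : ℤ)
    (hh0 : |(h0 : ℝ) - f ((m - 1/2) * Δ) / δ| ≤ 1/2)
    (hh1 : |(h1 : ℝ) - f' ((m - 1/2) * Δ) / (δ / Δ)| ≤ 1/2) :
    ∀ x ∈ Set.Icc (((m : ℝ) - 1) * Δ) ((m : ℝ) * Δ),
      |f x - ((h0 : ℝ) * δ + (h1 : ℝ) * (δ / Δ) * (x - ((m : ℝ) - 1/2) * Δ))|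
        ≤ (1 / 2 ^ α) * β * Δ ^ α + (3/4) * δ :=
  local_quantized_approx_general α β Δ δ hα₁ hβ hΔ hδ f f' hdiff hhold m hm₁ hm₂ h0 h1 hh0 hh1
end

section
/- Fix α ∈ (1,2], β > 0, Δ ∈ (0,1) with 1/Δ ∈ ℕ, δ > 0 with δ = βΔ^α (note c₁ = 1 when k = 1, α ∈ (1,2]), and δ₁ = δ/Δ. Let f : [0,1] → [0,1] be differentiable with |f(x)| ≤ β, |f'(x)| ≤ β, and |f'(y) − f'(x)| ≤ β|y−x|^{α−1} for all x,y ∈ [0,1]. For each m ∈ {1,…,1/Δ} with cell center x_m = (m−1/2)Δ, let h⁽⁰⁾(m) be an integer closest to f(x_m)/δ and h⁽¹⁾(m) an integer closest to f'(x_m)/δ₁. Then for every m ∈ {1,…,1/Δ − 1}: |h⁽¹⁾(m+1) − h⁽¹⁾(m)| < 3, |h⁽⁰⁾(m+1) − h⁽⁰⁾(m) − h⁽¹⁾(m)| < 3, and |h⁽⁰⁾(m) − h⁽⁰⁾(m+1) + h⁽¹⁾(m+1)| < 3. -/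
/-!
Rounding `f` and `f'` at the centres `x_m` of the cells introduces an error of at most `1/2` in
units of `δ` and `δ₁ = δ / Δ` respectively. On the other hand, Hölder continuity of `f'` gives
`|f'(x_{m+1}) - f'(x_m)| ≤ βΔ^{α-1} = δ₁` and, through the mean value inequality applied to
`t ↦ f t - f'(c) t`, `|f(x_{m+1}) - f(x_m) - f'(c)Δ| ≤ βΔ^α = δ` for `c = x_m, x_{m+1}`. Each of
the three integer combinations is thus within `3/2` of a real number of absolute value at most
`1`, hence smaller than `3` in absolute value.
-/

open Set

theorem abs_sub_sub_mul_le_of_abs_deriv_sub_le {f f' : ℝ → ℝ} {a b c M : ℝ} (hab : a ≤ b)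
    (hf : ∀ t ∈ Icc a b, HasDerivWithinAt f (f' t) (Icc a b) t)
    (hM : ∀ t ∈ Icc a b, |f' t - f' c| ≤ M) :
    |f b - f a - f' c * (b - a)| ≤ M * (b - a) := by
  have hg : ∀ t ∈ Icc a b,
      HasDerivWithinAt (fun t ↦ f t - f' c * t) (f' t - f' c) (Icc a b) t := fun t ht ↦
    ((hf t ht).sub ((hasDerivWithinAt_id t _).const_mul (f' c))).congr_deriv (by simp)
  have key := (convex_Icc a b).norm_image_sub_le_of_norm_hasDerivWithin_le hg hM
    (left_mem_Icc.2 hab) (right_mem_Icc.2 hab)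
  rw [Real.norm_eq_abs, Real.norm_eq_abs, abs_of_nonneg (sub_nonneg.2 hab)] at key
  calc |f b - f a - f' c * (b - a)| = |f b - f' c * b - (f a - f' c * a)| := by
        congr 1; ring
    _ ≤ M * (b - a) := key

theorem abs_sub_sub_mul_le_of_holder_deriv {f f' : ℝ → ℝ} {s : Set ℝ} {β γ a b c : ℝ}
    (hβ : 0 ≤ β) (hγ : 0 ≤ γ) (hf : ∀ t ∈ s, HasDerivWithinAt f (f' t) s t)
    (hhold : ∀ x ∈ s, ∀ y ∈ s, |f' y - f' x| ≤ β * |y - x| ^ γ)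
    (hs : Icc a b ⊆ s) (hc : c ∈ Icc a b) :
    |f b - f a - f' c * (b - a)| ≤ β * (b - a) ^ (γ + 1) := by
  have hab : a ≤ b := hc.1.trans hc.2
  have hM : ∀ t ∈ Icc a b, |f' t - f' c| ≤ β * (b - a) ^ γ := fun t ht ↦ by
    have hdist : |t - c| ≤ b - a :=
      abs_sub_le_iff.2 ⟨by linarith [ht.2, hc.1], by linarith [ht.1, hc.2]⟩
    calc |f' t - f' c| ≤ β * |t - c| ^ γ := hhold c (hs hc) t (hs ht)
      _ ≤ β * (b - a) ^ γ := by gcongr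
  calc |f b - f a - f' c * (b - a)| ≤ β * (b - a) ^ γ * (b - a) :=
        abs_sub_sub_mul_le_of_abs_deriv_sub_le hab (fun t ht ↦ (hf t (hs ht)).mono hs) hM
    _ = β * (b - a) ^ (γ + 1) := by
        rw [Real.rpow_add_one' (sub_nonneg.2 hab) (by linarith), mul_assoc]

theorem cell_center_mem_Icc {Δ : ℝ} {m : ℕ} (hΔ : 0 < Δ) (hm : 1 ≤ m) (hmΔ : (m : ℝ) ≤ 1 / Δ) :
    ((m : ℝ) - 1 / 2) * Δ ∈ Icc (0 : ℝ) 1 := by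
  have hm' : (1 : ℝ) ≤ m := by exact_mod_cast hm
  rw [le_div_iff₀ hΔ] at hmΔ
  constructor <;> nlinarith

theorem abs_div_le_one_of_abs_le {p q : ℝ} (h : |p| ≤ q) : |p / q| ≤ 1 := by
  rw [abs_div]
  exact div_le_one_of_le₀ (h.trans (le_abs_self q)) (abs_nonneg q)

theorem abs_sub_sub_div_le_one_of_holder_deriv {f f' : ℝ → ℝ} {s : Set ℝ} {β γ a b c Δ δ : ℝ}
    (hβ : 0 ≤ β) (hγ : 0 ≤ γ) (hf : ∀ t ∈ s, HasDerivWithinAt f (f' t) s t)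
    (hhold : ∀ x ∈ s, ∀ y ∈ s, |f' y - f' x| ≤ β * |y - x| ^ γ)
    (hs : Icc a b ⊆ s) (hc : c ∈ Icc a b) (hba : b - a = Δ) (hδ : δ = β * Δ ^ (γ + 1)) :
    |f b / δ - f a / δ - f' c / (δ / Δ)| ≤ 1 := by
  rw [div_div_eq_mul_div, ← sub_div, ← sub_div]
  refine abs_div_le_one_of_abs_le ?_
  rw [hδ, ← hba]
  exact abs_sub_sub_mul_le_of_holder_deriv hβ hγ hf hhold hs hc

theorem Int.abs_lt_three_of_abs_sub_le {n : ℤ} {r : ℝ} (hn : |(n : ℝ) - r| ≤ 3 / 2)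
    (hr : |r| ≤ 1) : |n| < 3 := by
  have : |(n : ℝ)| < 3 := calc
    |(n : ℝ)| = |((n : ℝ) - r) + r| := by rw [sub_add_cancel]
    _ ≤ |(n : ℝ) - r| + |r| := abs_add_le _ _
    _ < 3 := by linarith
  exact_mod_cast this

theorem abs_lt_three_of_rounding {u₀ u₁ v₀ v₁ : ℤ} {x₀ x₁ y₀ y₁ : ℝ}
    (hu₀ : |(u₀ : ℝ) - x₀| ≤ 1 / 2) (hv₀ : |(v₀ : ℝ) - y₀| ≤ 1 / 2)
    (hu₁ : |(u₁ : ℝ) - x₁| ≤ 1 / 2) (hv₁ : |(v₁ : ℝ) - y₁| ≤ 1 / 2)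
    (hy : |y₁ - y₀| ≤ 1) (hx₀ : |x₁ - x₀ - y₀| ≤ 1) (hx₁ : |x₁ - x₀ - y₁| ≤ 1) :
    |v₁ - v₀| < 3 ∧ |u₁ - u₀ - v₀| < 3 ∧ |u₀ - u₁ + v₁| < 3 := by
  rw [abs_le] at hu₀ hv₀ hu₁ hv₁
  refine ⟨Int.abs_lt_three_of_abs_sub_le ?_ hy, Int.abs_lt_three_of_abs_sub_le ?_ hx₀,
    Int.abs_lt_three_of_abs_sub_le (r := -(x₁ - x₀ - y₁)) ?_ ((abs_neg _).trans_le hx₁)⟩ <;>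
  · push_cast
    rw [abs_le]
    constructor <;> linarith

theorem good_continuation_general (α β Δ : ℝ) (hα₁ : 1 < α) (hβ : 0 < β)
    (hΔ : Δ ∈ Set.Ioo (0:ℝ) 1)
    (δ : ℝ) (hδ : δ = β * Δ ^ α)
    (f f' : ℝ → ℝ)
    (hdiff : ∀ x ∈ Set.Icc (0:ℝ) 1, HasDerivWithinAt f (f' x) (Set.Icc (0:ℝ) 1) x)
    (hhold : ∀ x ∈ Set.Icc (0:ℝ) 1, ∀ y ∈ Set.Icc (0:ℝ) 1,
      |f' y - f' x| ≤ β * |y - x| ^ (α - 1))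
    (h0 h1 : ℕ → ℤ)
    (hh0 : ∀ m : ℕ, 1 ≤ m → (m : ℝ) ≤ 1 / Δ →
      |(h0 m : ℝ) - f (((m : ℝ) - 1/2) * Δ) / δ| ≤ 1/2)
    (hh1 : ∀ m : ℕ, 1 ≤ m → (m : ℝ) ≤ 1 / Δ →
      |(h1 m : ℝ) - f' (((m : ℝ) - 1/2) * Δ) / (δ / Δ)| ≤ 1/2) :
    ∀ m : ℕ, 1 ≤ m → ((m : ℝ) + 1) ≤ 1 / Δ →
      |h1 (m + 1) - h1 m| < 3 ∧
      |h0 (m + 1) - h0 m - h1 m| < 3 ∧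
      |h0 m - h0 (m + 1) + h1 (m + 1)| < 3 := by
  intro m hm hm1
  have hΔ0 : 0 < Δ := hΔ.1
  have hm1' : ((m + 1 : ℕ) : ℝ) ≤ 1 / Δ := by exact_mod_cast hm1
  have hm0 : (m : ℝ) ≤ 1 / Δ := by linarith
  set a := ((m : ℝ) - 1 / 2) * Δ
  set b := (((m + 1 : ℕ) : ℝ) - 1 / 2) * Δ
  have ha : a ∈ Icc (0 : ℝ) 1 := cell_center_mem_Icc hΔ0 hm hm0
  have hb : b ∈ Icc (0 : ℝ) 1 := cell_center_mem_Icc hΔ0 (by omega) hm1'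
  have hba : b - a = Δ := by simp only [a, b]; push_cast; ring
  have hab : a ≤ b := by linarith
  have hs : Icc a b ⊆ Icc 0 1 := Icc_subset_Icc ha.1 hb.2
  have hγ : 0 ≤ α - 1 := by linarith
  have hδ' : δ = β * Δ ^ (α - 1 + 1) := by rw [sub_add_cancel, hδ]
  have hδ₁ : δ / Δ = β * Δ ^ (α - 1) := by
    rw [hδ', Real.rpow_add_one' hΔ0.le (by linarith)]
    field_simp
  have hy : |f' b / (δ / Δ) - f' a / (δ / Δ)| ≤ 1 := by
    rw [← sub_div]
    refine abs_div_le_one_of_abs_le ?_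
    simpa only [hδ₁, hba, abs_of_pos hΔ0] using hhold a ha b hb
  exact abs_lt_three_of_rounding (hh0 m hm hm0) (hh1 m hm hm0)
    (hh0 (m + 1) (by omega) hm1') (hh1 (m + 1) (by omega) hm1') hy
    (abs_sub_sub_div_le_one_of_holder_deriv hβ.le hγ hdiff hhold hs (left_mem_Icc.2 hab) hba hδ')
    (abs_sub_sub_div_le_one_of_holder_deriv hβ.le hγ hdiff hhold hs (right_mem_Icc.2 hab) hba hδ')

/-- quantized Taylor coefficients at adjacent cells satisfy the
good-continuation condition (k = 1, α ∈ (1,2]). -/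
theorem good_continuation (α β Δ : ℝ) (hα₁ : 1 < α) (hα₂ : α ≤ 2) (hβ : 0 < β)
    (hΔ : Δ ∈ Set.Ioo (0:ℝ) 1) (hΔnat : ∃ n : ℕ, (n : ℝ) = 1 / Δ)
    (δ : ℝ) (hδ : δ = β * Δ ^ α)
    (f f' : ℝ → ℝ)
    (hrange : ∀ x ∈ Set.Icc (0:ℝ) 1, f x ∈ Set.Icc (0:ℝ) 1)
    (hdiff : ∀ x ∈ Set.Icc (0:ℝ) 1, HasDerivWithinAt f (f' x) (Set.Icc (0:ℝ) 1) x)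
    (hf : ∀ x ∈ Set.Icc (0:ℝ) 1, |f x| ≤ β)
    (hf' : ∀ x ∈ Set.Icc (0:ℝ) 1, |f' x| ≤ β)
    (hhold : ∀ x ∈ Set.Icc (0:ℝ) 1, ∀ y ∈ Set.Icc (0:ℝ) 1,
      |f' y - f' x| ≤ β * |y - x| ^ (α - 1))
    (h0 h1 : ℕ → ℤ)
    (hh0 : ∀ m : ℕ, 1 ≤ m → (m : ℝ) ≤ 1 / Δ →
      |(h0 m : ℝ) - f (((m : ℝ) - 1/2) * Δ) / δ| ≤ 1/2)
    (hh1 : ∀ m : ℕ, 1 ≤ m → (m : ℝ) ≤ 1 / Δ →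
      |(h1 m : ℝ) - f' (((m : ℝ) - 1/2) * Δ) / (δ / Δ)| ≤ 1/2) :
    ∀ m : ℕ, 1 ≤ m → ((m : ℝ) + 1) ≤ 1 / Δ →
      |h1 (m + 1) - h1 m| < 3 ∧
      |h0 (m + 1) - h0 m - h1 m| < 3 ∧
      |h0 m - h0 (m + 1) + h1 (m + 1)| < 3 :=
  good_continuation_general α β Δ hα₁ hβ hΔ δ hδ f f' hdiff hhold h0 h1 hh0 hh1
end

section
/- Fix α ∈ (1,2], β > 0, Δ ∈ (0,1) with 1/Δ ∈ ℕ, δ = βΔ^α, δ₁ = δ/Δ, and c₀ = 2^{-α} + 3/4. Let f : [0,1] → [0,1] satisfy the Hölder conditions |f| ≤ β, |f'| ≤ β, |f'(y) − f'(x)| ≤ β|y−x|^{α−1}. For each m with cell I_m = [(m−1)Δ, mΔ] and center x_m, let h⁽⁰⁾(m), h⁽¹⁾(m) be closest-integer quantizations of f(x_m)/δ and f'(x_m)/δ₁, and set p_m(x) = h⁽⁰⁾(m)δ + h⁽¹⁾(m)δ₁(x − x_m) and R_m = {(x,z) ∈ I_m × [0,1] : |z − p_m(x)| ≤ c₀δ}.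 Then the graph {(x, f(x)) : x ∈ [0,1]} is contained in ∪_m R_m. -/
set_option maxHeartbeats 1000000 in
/-- the graph of a Hölder function is covered by the tubular
regions around the selected quantized linear pieces (k = 1, α ∈ (1,2]). -/
theorem graph_covering (α β Δ : ℝ) (hα₁ : 1 < α) (hα₂ : α ≤ 2) (hβ : 0 < β)
    (hΔ : Δ ∈ Set.Ioo (0:ℝ) 1) (hΔnat : ∃ n : ℕ, (n : ℝ) = 1 / Δ)
    (δ : ℝ) (hδ : δ = β * Δ ^ α)
    (f f' : ℝ → ℝ)
    (hrange : ∀ x ∈ Set.Icc (0:ℝ) 1, f x ∈ Set.Icc (0:ℝ) 1)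
    (hdiff : ∀ x ∈ Set.Icc (0:ℝ) 1, HasDerivWithinAt f (f' x) (Set.Icc (0:ℝ) 1) x)
    (hf : ∀ x ∈ Set.Icc (0:ℝ) 1, |f x| ≤ β)
    (hf' : ∀ x ∈ Set.Icc (0:ℝ) 1, |f' x| ≤ β)
    (hhold : ∀ x ∈ Set.Icc (0:ℝ) 1, ∀ y ∈ Set.Icc (0:ℝ) 1,
      |f' y - f' x| ≤ β * |y - x| ^ (α - 1))
    (h0 h1 : ℕ → ℤ)
    (hh0 : ∀ m : ℕ, 1 ≤ m → (m : ℝ) ≤ 1 / Δ →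
      |(h0 m : ℝ) - f (((m : ℝ) - 1/2) * Δ) / δ| ≤ 1/2)
    (hh1 : ∀ m : ℕ, 1 ≤ m → (m : ℝ) ≤ 1 / Δ →
      |(h1 m : ℝ) - f' (((m : ℝ) - 1/2) * Δ) / (δ / Δ)| ≤ 1/2) :
    ∀ x ∈ Set.Icc (0:ℝ) 1, ∃ m : ℕ, 1 ≤ m ∧ (m : ℝ) ≤ 1 / Δ ∧
      x ∈ Set.Icc (((m : ℝ) - 1) * Δ) ((m : ℝ) * Δ) ∧
      f x ∈ Set.Icc (0:ℝ) 1 ∧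
      |f x - ((h0 m : ℝ) * δ + (h1 m : ℝ) * (δ / Δ) * (x - ((m : ℝ) - 1/2) * Δ))|
        ≤ ((2 : ℝ) ^ (-α) + 3/4) * δ := by
  intro x hx
  obtain ⟨n, hn⟩ := hΔnat
  obtain ⟨hΔ0, hΔ1⟩ := hΔ
  have hx0 := hx.1
  have hx1 := hx.2
  have hδ0 : 0 < δ := hδ ▸ mul_pos hβ (Real.rpow_pos_of_pos hΔ0 α)
  set m : ℕ := max 1 ⌈x / Δ⌉₊ with hmdef
  have hm1 : 1 ≤ m := le_max_left _ _
  have hone : (1:ℝ) < 1/Δ := one_lt_one_div hΔ0 hΔ1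
  have h1n : 1 ≤ n := by
    have h : (1:ℝ) < (n:ℝ) := hn ▸ hone
    exact_mod_cast h.le
  have hceil : ⌈x/Δ⌉₊ ≤ n := by
    apply Nat.ceil_le.mpr
    rw [hn]
    gcongr
  have hmn : m ≤ n := max_le h1n hceil
  have hmR : (m:ℝ) ≤ 1/Δ := by
    rw [← hn]; exact_mod_cast hmn
  have hm1R : (1:ℝ) ≤ (m:ℝ) := by exact_mod_cast hm1
  have hlo : ((m:ℝ) - 1) * Δ ≤ x := by
    rcases le_total ⌈x/Δ⌉₊ 1 with h | h
    · have hm : m = 1 := max_eq_left h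
      rw [hm]
      push_cast
      simpa using hx0
    · have hmc : m = ⌈x/Δ⌉₊ := max_eq_right h
      have h2 : (⌈x/Δ⌉₊ : ℝ) < x/Δ + 1 := Nat.ceil_lt_add_one (div_nonneg hx0 hΔ0.le)
      have h3 : (m:ℝ) - 1 ≤ x / Δ := by rw [hmc]; linarith
      have h4 := mul_le_mul_of_nonneg_right h3 hΔ0.le
      rwa [div_mul_cancel₀ x hΔ0.ne'] at h4
  have hhi : x ≤ (m:ℝ) * Δ := by
    have h3 : x/Δ ≤ (m:ℝ) := (Nat.le_ceil _).trans (by exact_mod_cast le_max_right 1 ⌈x/Δ⌉₊)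
    have h4 := mul_le_mul_of_nonneg_right h3 hΔ0.le
    rwa [div_mul_cancel₀ x hΔ0.ne'] at h4
  set c : ℝ := ((m:ℝ) - 1/2) * Δ with hcdef
  have hd : -(Δ/2) ≤ x - c ∧ x - c ≤ Δ/2 := by
    constructor <;> [nlinarith; nlinarith]
  have hdist : |x - c| ≤ Δ/2 := abs_le.mpr hd
  have hmΔ1 : (m:ℝ) * Δ ≤ 1 := by
    have h4 := mul_le_mul_of_nonneg_right hmR hΔ0.le
    rwa [one_div, inv_mul_cancel₀ hΔ0.ne'] at h4
  have hc01 : c ∈ Set.Icc (0:ℝ) 1 := by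
    constructor
    · nlinarith
    · nlinarith
  -- Taylor estimate on the segment between x and c
  set a : ℝ := min x c with hadef
  set b : ℝ := max x c with hbdef
  have hsub : Set.Icc a b ⊆ Set.Icc (0:ℝ) 1 := by
    intro t ht
    exact ⟨(le_min hx0 hc01.1).trans ht.1, ht.2.trans (max_le hx1 hc01.2)⟩
  have hxs : x ∈ Set.Icc a b := ⟨min_le_left _ _, le_max_left _ _⟩
  have hcs : c ∈ Set.Icc a b := ⟨min_le_right _ _, le_max_right _ _⟩
  have hα0 : (0:ℝ) ≤ α - 1 := by linarith
  have hC : ∀ t ∈ Set.Icc a b, ‖f' t - f' c‖ ≤ β * (Δ/2)^(α-1) := by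
    intro t ht
    have ht01 := hsub ht
    have h1 := hhold c hc01 t ht01
    have hta : c - Δ/2 ≤ a := le_min (by linarith [hd.1]) (by linarith)
    have htb : b ≤ c + Δ/2 := max_le (by linarith [hd.2]) (by linarith)
    have htc : |t - c| ≤ Δ/2 := abs_le.mpr ⟨by linarith [ht.1], by linarith [ht.2]⟩
    calc ‖f' t - f' c‖ = |f' t - f' c| := rfl
      _ ≤ β * |t - c| ^ (α-1) := h1
      _ ≤ β * (Δ/2) ^ (α-1) := by
          apply mul_le_mul_of_nonneg_left _ hβ.le
          exact Real.rpow_le_rpow (abs_nonneg _) htc hα0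
  have hg : ∀ t ∈ Set.Icc a b,
      HasDerivWithinAt (fun y => f y - f' c * y) (f' t - f' c) (Set.Icc a b) t := by
    intro t ht
    have h1 : HasDerivWithinAt f (f' t) (Set.Icc a b) t := (hdiff t (hsub ht)).mono hsub
    have h2 : HasDerivWithinAt (fun y => f' c * y) (f' c) (Set.Icc a b) t := by
      simpa using (hasDerivWithinAt_id t (Set.Icc a b)).const_mul (f' c)
    exact h1.sub h2
  have key := (convex_Icc a b).norm_image_sub_le_of_norm_hasDerivWithin_le hg hC hcs hxs
  have hΔ2 : (0:ℝ) < Δ/2 := by linarith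
  have htay : |f x - f c - f' c * (x - c)| ≤ β * (Δ/2) ^ α := by
    have e1 : |f x - f c - f' c * (x - c)| =
        ‖(f x - f' c * x) - (f c - f' c * c)‖ := by
      rw [Real.norm_eq_abs]; ring_nf
    have e2 : ‖x - c‖ = |x - c| := rfl
    have h5 : β * (Δ/2)^(α-1) * |x - c| ≤ β * (Δ/2)^(α-1) * (Δ/2) := by
      apply mul_le_mul_of_nonneg_left hdist
      positivity
    have h6 : β * (Δ/2)^(α-1) * (Δ/2) = β * (Δ/2)^α := by
      rw [mul_assoc, ← Real.rpow_add_one hΔ2.ne']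
      norm_num
    rw [e1]
    calc ‖(f x - f' c * x) - (f c - f' c * c)‖ ≤ β * (Δ/2)^(α-1) * ‖x - c‖ := key
      _ = β * (Δ/2)^(α-1) * |x - c| := by rw [e2]
      _ ≤ β * (Δ/2)^(α-1) * (Δ/2) := h5
      _ = β * (Δ/2)^α := h6
  have hsplit : β * (Δ/2)^α = (2:ℝ)^(-α) * δ := by
    rw [hδ, Real.div_rpow hΔ0.le (by norm_num : (0:ℝ) ≤ 2),
      Real.rpow_neg (by norm_num : (0:ℝ) ≤ 2)]
    ring
  -- quantization bounds
  have hδ₁0 : 0 < δ/Δ := div_pos hδ0 hΔ0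
  have hq0 := hh0 m hm1 hmR
  have hq1 := hh1 m hm1 hmR
  have hq0' : |(h0 m : ℝ) * δ - f c| ≤ δ/2 := by
    have h2 : |(h0 m : ℝ) - f c / δ| * δ ≤ (1/2) * δ :=
      mul_le_mul_of_nonneg_right hq0 hδ0.le
    have e0 : (h0 m:ℝ)*δ - f c = ((h0 m:ℝ) - f c/δ) * δ := by field_simp
    rw [e0, abs_mul, abs_of_pos hδ0]; linarith
  have hq1' : |(h1 m : ℝ) * (δ/Δ) - f' c| ≤ (δ/Δ)/2 := by
    have h2 : |(h1 m : ℝ) - f' c / (δ/Δ)| * (δ/Δ) ≤ (1/2) * (δ/Δ) :=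
      mul_le_mul_of_nonneg_right hq1 hδ₁0.le
    have e1 : (h1 m:ℝ)*(δ/Δ) - f' c = ((h1 m:ℝ) - f' c/(δ/Δ)) * (δ/Δ) := by
      field_simp
    rw [e1, abs_mul, abs_of_pos hδ₁0]; linarith
  have hq1'' : |((h1 m:ℝ)*(δ/Δ) - f' c) * (x - c)| ≤ δ/4 := by
    rw [abs_mul]
    have h3 : |(h1 m:ℝ)*(δ/Δ) - f' c| * |x - c| ≤ ((δ/Δ)/2) * (Δ/2) :=
      mul_le_mul hq1' hdist (abs_nonneg _) (by positivity)
    have h4 : ((δ/Δ)/2) * (Δ/2) = δ/4 := by field_simp; ring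
    linarith
  refine ⟨m, hm1, hmR, Set.mem_Icc.mpr ⟨hlo, hhi⟩, hrange x hx, ?_⟩
  have hdecomp : f x - ((h0 m:ℝ)*δ + (h1 m:ℝ)*(δ/Δ)*(x - c)) =
      (f x - f c - f' c*(x-c)) + (f c - (h0 m:ℝ)*δ) +
        -(((h1 m:ℝ)*(δ/Δ) - f' c) * (x-c)) := by ring
  rw [hdecomp]
  have t1 := htay
  have t2 : |f c - (h0 m:ℝ)*δ| ≤ δ/2 := by rwa [abs_sub_comm] at hq0'
  have t3 : |-(((h1 m:ℝ)*(δ/Δ) - f' c) * (x-c))| ≤ δ/4 := by rwa [abs_neg]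
  calc |(f x - f c - f' c*(x-c)) + (f c - (h0 m:ℝ)*δ) +
        -(((h1 m:ℝ)*(δ/Δ) - f' c) * (x-c))|
      ≤ |(f x - f c - f' c*(x-c)) + (f c - (h0 m:ℝ)*δ)| +
        |-(((h1 m:ℝ)*(δ/Δ) - f' c) * (x-c))| := abs_add_le _ _
    _ ≤ |f x - f c - f' c*(x-c)| + |f c - (h0 m:ℝ)*δ| +
        |-(((h1 m:ℝ)*(δ/Δ) - f' c) * (x-c))| := by
          linarith [abs_add_le (f x - f c - f' c*(x-c)) (f c - (h0 m:ℝ)*δ)]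
    _ ≤ ((2:ℝ)^(-α) + 3/4) * δ := by
          rw [hsplit] at t1
          linarith
end

section
/- Let d ≥ 2 and let b₁, b₂, b₃ ∈ ℝ^d with b₂ ≠ b₁. Fix coordinate r such that |b_{r,2} − b_{r,1}| = ‖b₂ − b₁‖_∞ > 0, and suppose that for all coordinates r' = 1,…,d, ‖(b_{r',2} − b_{r',1})(b₃ − b₂) − (b_{r',3} − b_{r',2})(b₂ − b₁)‖_∞ ≤ ε(‖b₃ − b₂‖_∞ + ‖b₂ − b₁‖_∞). Define b₃* = b₂ + ((b_{r,3} − b_{r,2})/(b_{r,2} − b_{r,1}))(b₂ − b₁). Then ‖b₃ − b₃*‖_∞ ≤ ε(‖b₃ − b₂‖_∞ + ‖b₂ − b₁‖_∞)/‖b₂ − b₁‖_∞. -/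
/-- the good-continuation condition forces b₃ close to the linear
extrapolation b₃* of the segment [b₁,b₂] (sup-norm). -/
theorem extrapolation_estimate (d : ℕ) (hd : 2 ≤ d) (ε : ℝ)
    (b₁ b₂ b₃ : Fin d → ℝ) (hne : b₂ ≠ b₁)
    (r : Fin d) (hr : |b₂ r - b₁ r| = ‖b₂ - b₁‖)
    (hgc : ∀ r' : Fin d,
      ‖(b₂ r' - b₁ r') • (b₃ - b₂) - (b₃ r' - b₂ r') • (b₂ - b₁)‖
        ≤ ε * (‖b₃ - b₂‖ + ‖b₂ - b₁‖)) :
    ‖b₃ - (b₂ + ((b₃ r - b₂ r) / (b₂ r - b₁ r)) • (b₂ - b₁))‖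
      ≤ ε * (‖b₃ - b₂‖ + ‖b₂ - b₁‖) / ‖b₂ - b₁‖ := by
  have hpos : (0:ℝ) < ‖b₂ - b₁‖ := by
    rw [norm_sub_pos_iff]; exact hne
  have hrne : b₂ r - b₁ r ≠ 0 := by
    intro h
    rw [h, abs_zero] at hr
    exact hpos.ne hr
  have key : (b₂ r - b₁ r) • (b₃ - (b₂ + ((b₃ r - b₂ r) / (b₂ r - b₁ r)) • (b₂ - b₁)))
      = (b₂ r - b₁ r) • (b₃ - b₂) - (b₃ r - b₂ r) • (b₂ - b₁) := by
    rw [smul_sub, smul_add, smul_smul, mul_div_cancel₀ _ hrne, smul_sub, smul_sub]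
    abel
  have h1 := hgc r
  rw [← key, norm_smul, Real.norm_eq_abs, hr] at h1
  rw [le_div_iff₀ hpos]
  linarith [h1]
end
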